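/- Let J be a measurable range function, W ⊆ L²(Ω, H) the closed subspace corresponding to J, R a measurable range operator on J, and U : W → W a positive bounded linear operator (self-adjoint with ⟨Uφ, φ⟩ ≥ 0 for all φ ∈ W) satisfying (Uφ)(ω) = R(ω)(φ(ω)) for a.e. ω ∈ Ω, for every φ ∈ W. Let (φ_n)_{n∈ℕ} be a sequence in W such that for a.e. ω ∈ Ω, the family (φ_n(ω))_{n∈ℕ} is a Parseval frame for J(ω). Then for a.e. ω ∈ Ω the operator R(ω) is positive on J(ω) (⟨R(ω)a, a⟩ ≥ 0 for all a ∈ J(ω)), Σ_{n∈ℕ} ⟨U φ_n, φ_n⟩ = ∫_Ω Σ_{n∈ℕ} ⟨R(ω)(φ_n(ω)), φ_n(ω)⟩ dm(ω) (in [0, ∞]); consequently, if Σ_{n∈ℕ} ⟨U φ_n, φ_n⟩ < ∞, then for a.e. ω ∈ Ω one has Σ_{n∈ℕ} ⟨R(ω)(φ_n(ω)), φ_n(ω)⟩ < ∞, i.e., R(ω) is of finite trace on J(ω). (Proposition 3.3(2), stated in the multiplication-preserving formulation on L²(Ω, H).) -/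

import Mathlib

open MeasureTheory
open scoped ENNReal NNReal

/-- The orthogonal projection of `H` onto a closed subspace `K`, as a map `H →L[ℂ] H`
(junk `0` if `K` is not closed). -/
noncomputable def projCLM {H : Type*} [NormedAddCommGroup H] [InnerProductSpace ℂ H]
    [CompleteSpace H] (K : Submodule ℂ H) : H →L[ℂ] H :=
  haveI := Classical.dec (IsClosed (K : Set H))
  if h : IsClosed (K : Set H) then
    haveI : CompleteSpace K := h.completeSpace_coe
    K.subtypeL.comp (K.orthogonalProjectionOnto)
  else 0

/-- The subspace `W = {φ ∈ L²(Ω, H) : φ(ω) ∈ J(ω) for a.e. ω}` corresponding to a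
range function `J`. -/
noncomputable def rangeSubmodule {Ω H : Type*} [MeasurableSpace Ω] (μ : Measure Ω)
    [NormedAddCommGroup H] [InnerProductSpace ℂ H]
    (J : Ω → Submodule ℂ H) : Submodule ℂ (Lp H 2 μ) where
  carrier := {φ | ∀ᵐ ω ∂μ, (φ : Ω → H) ω ∈ J ω}
  add_mem' := by
    intro φ ψ hφ hψ
    simp only [Set.mem_setOf_eq] at *
    filter_upwards [Lp.coeFn_add φ ψ, hφ, hψ] with ω h1 h2 h3
    rw [h1]; exact (J ω).add_mem h2 h3
  zero_mem' := by
    simp only [Set.mem_setOf_eq]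
    filter_upwards [Lp.coeFn_zero H 2 μ] with ω h
    rw [h]; exact (J ω).zero_mem
  smul_mem' := by
    intro c φ hφ
    simp only [Set.mem_setOf_eq] at *
    filter_upwards [Lp.coeFn_smul c φ, hφ] with ω h1 h2
    rw [h1]; exact (J ω).smul_mem c h2

theorem aux_Lp_coeFn_finsetSum {α E : Type*} [MeasurableSpace α] {μ : Measure α}
    [NormedAddCommGroup E] {p : ℝ≥0∞} {ι : Type*} (s : Finset ι) (f : ι → Lp E p μ) :
    ⇑(∑ i ∈ s, f i) =ᵐ[μ] fun ω => ∑ i ∈ s, f i ω := by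
  classical
  induction s using Finset.cons_induction with
  | empty => simp only [Finset.sum_empty]; exact Lp.coeFn_zero E p μ
  | cons i s hi ih =>
      rw [Finset.sum_cons]
      filter_upwards [Lp.coeFn_add (f i) (∑ j ∈ s, f j), ih] with ω h1 h2
      rw [h1, Pi.add_apply, h2, Finset.sum_cons]

theorem aux_exists_rat_near_complex (z : ℂ) {δ : ℝ} (hδ : 0 < δ) :
    ∃ q : ℚ × ℚ, ‖z - ((q.1 : ℝ) + (q.2 : ℝ) * Complex.I)‖ < δ := by
  obtain ⟨q1, hq1⟩ := exists_rat_near z.re (by positivity : (0:ℝ) < δ/2)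
  obtain ⟨q2, hq2⟩ := exists_rat_near z.im (by positivity : (0:ℝ) < δ/2)
  refine ⟨(q1, q2), ?_⟩
  have hre : (z - ((q1 : ℝ) + (q2 : ℝ) * Complex.I)).re = z.re - q1 := by simp
  have him : (z - ((q1 : ℝ) + (q2 : ℝ) * Complex.I)).im = z.im - q2 := by simp
  calc ‖z - ((q1 : ℝ) + (q2 : ℝ) * Complex.I)‖
      ≤ |(z - ((q1 : ℝ) + (q2 : ℝ) * Complex.I)).re| +
        |(z - ((q1 : ℝ) + (q2 : ℝ) * Complex.I)).im| :=
        Complex.norm_le_abs_re_add_abs_im _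
    _ < δ := by rw [hre, him]; linarith

set_option maxHeartbeats 1000000 in
theorem aux_dense_pos {H : Type*} [NormedAddCommGroup H] [InnerProductSpace ℂ H]
    [CompleteSpace H] (J0 : Submodule ℂ H) (hJ0 : IsClosed (J0 : Set H))
    (R0 : H →L[ℂ] H) (x : ℕ → H) (hx : ∀ n, x n ∈ J0)
    (hPar : ∀ a ∈ J0, HasSum (fun n => ‖(inner ℂ a (x n) : ℂ)‖ ^ 2) (‖a‖ ^ 2))
    (hQ : ∀ d : ℕ →₀ ℚ × ℚ,
      0 ≤ (inner ℂ (∑ n ∈ d.support, ((((d n).1 : ℝ) : ℂ) + (((d n).2 : ℝ) : ℂ) * Complex.I) • x n)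
            (R0 (∑ n ∈ d.support,
              ((((d n).1 : ℝ) : ℂ) + (((d n).2 : ℝ) : ℂ) * Complex.I) • x n)) : ℂ).re)
    {a : H} (ha : a ∈ J0) : 0 ≤ (inner ℂ a (R0 a) : ℂ).re := by
  classical
  set cq : ℚ × ℚ → ℂ := fun q => (((q.1 : ℝ) : ℂ) + ((q.2 : ℝ) : ℂ) * Complex.I) with hcq
  have hcq0 : cq 0 = 0 := by simp [hcq]
  have hScl : IsClosed {y : H | 0 ≤ (inner ℂ y (R0 y) : ℂ).re} := by
    have hc : Continuous fun y : H => (inner ℂ y (R0 y) : ℂ).re :=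
      Complex.continuous_re.comp (continuous_id.inner R0.continuous)
    exact isClosed_le continuous_const hc
  set T : Set H := Set.range (fun d : ℕ →₀ ℚ × ℚ => ∑ n ∈ d.support, cq (d n) • x n)
    with hTdef
  have hTS : T ⊆ {y : H | 0 ≤ (inner ℂ y (R0 y) : ℂ).re} := by
    rintro _ ⟨d, rfl⟩
    exact hQ d
  suffices hcl : a ∈ closure T by
    exact hScl.closure_subset_iff.mpr hTS hcl
  set K : Submodule ℂ H := (Submodule.span ℂ (Set.range x)).topologicalClosure with hK
  haveI : CompleteSpace K := (Submodule.isClosed_topologicalClosure _).completeSpace_coe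
  have hKJ : K ≤ J0 := by
    refine Submodule.topologicalClosure_minimal _ ?_ hJ0
    rw [Submodule.span_le]
    rintro _ ⟨n, rfl⟩
    exact hx n
  have hb : a - (K.orthogonalProjectionOnto a : H) ∈ Kᗮ :=
    K.sub_starProjection_mem_orthogonal a
  set b : H := a - (K.orthogonalProjectionOnto a : H) with hbdef
  have hbJ : b ∈ J0 := J0.sub_mem ha (hKJ (K.orthogonalProjectionOnto a).2)
  have hzero : ∀ n, (inner ℂ b (x n) : ℂ) = 0 := by
    intro n
    have hxK : x n ∈ K :=
      Submodule.le_topologicalClosure _ (Submodule.subset_span ⟨n, rfl⟩)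
    have h0 : (inner ℂ (x n) b : ℂ) = 0 := (Submodule.mem_orthogonal _ _).mp hb _ hxK
    rw [← inner_conj_symm, h0, map_zero]
  have hnb : ‖b‖ ^ 2 = 0 := by
    have h0 : HasSum (fun n : ℕ => ‖(inner ℂ b (x n) : ℂ)‖ ^ 2) 0 := by
      have : (fun n : ℕ => ‖(inner ℂ b (x n) : ℂ)‖ ^ 2) = fun _ => (0:ℝ) := by
        funext n; rw [hzero n]; simp
      rw [this]
      exact hasSum_zero
    exact (h0.unique (hPar b hbJ)).symm
  have hb0 : b = 0 := by
    have := sq_eq_zero_iff.mp hnb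
    simpa using this
  have haK : a ∈ K := by
    have heq : a = (K.orthogonalProjectionOnto a : H) := sub_eq_zero.mp hb0
    rw [heq]
    exact (K.orthogonalProjectionOnto a).2
  have haspan : a ∈ closure ((Submodule.span ℂ (Set.range x) : Submodule ℂ H) : Set H) := by
    have hKc : (K : Set H)
        = closure ((Submodule.span ℂ (Set.range x) : Submodule ℂ H) : Set H) :=
      Submodule.topologicalClosure_coe _
    rw [← hKc]
    exact haK
  have hspanT : ((Submodule.span ℂ (Set.range x) : Submodule ℂ H) : Set H) ⊆ closure T := by
    intro v hv
    obtain ⟨c, rfl⟩ := Finsupp.mem_span_range_iff_exists_finsupp.mp hv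
    rw [Metric.mem_closure_iff]
    intro ε hε
    set s : Finset ℕ := c.support with hs
    set M : ℕ := s.card with hM
    have hδ : ∀ n : ℕ, (0:ℝ) < ε / (M + 1) / (‖x n‖ + 1) := by
      intro n
      have h2 : (0:ℝ) < ‖x n‖ + 1 := by positivity
      positivity
    choose q hq using fun n : ℕ => aux_exists_rat_near_complex (c n) (hδ n)
    set d : ℕ →₀ ℚ × ℚ := Finsupp.onFinset s (fun n => if n ∈ s then q n else 0)
      (by intro n hn; by_contra hns; simp [hns] at hn) with hd
    refine ⟨∑ n ∈ d.support, cq (d n) • x n, ⟨d, rfl⟩, ?_⟩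
    have hdsub : d.support ⊆ s := by
      intro n hn
      by_contra hns
      have : d n = 0 := by simp [hd, Finsupp.onFinset_apply, hns]
      exact (Finsupp.mem_support_iff.mp hn) this
    have hsum_eq : ∑ n ∈ d.support, cq (d n) • x n = ∑ n ∈ s, cq (q n) • x n := by
      rw [Finset.sum_subset hdsub]
      · apply Finset.sum_congr rfl
        intro n hn
        have : d n = q n := by simp [hd, Finsupp.onFinset_apply, hn]
        rw [this]
      · intro n hn hnd
        have : d n = 0 := Finsupp.notMem_support_iff.mp hnd
        rw [this, hcq0, zero_smul]
    have hvsum : (c.sum fun n (z : ℂ) => z • x n) = ∑ n ∈ s, c n • x n := rfl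
    rw [dist_eq_norm, hsum_eq, hvsum]
    have hdiff : ∑ n ∈ s, c n • x n - ∑ n ∈ s, cq (q n) • x n
        = ∑ n ∈ s, (c n - cq (q n)) • x n := by
      rw [← Finset.sum_sub_distrib]
      apply Finset.sum_congr rfl
      intro n _
      rw [sub_smul]
    rw [hdiff]
    have hbound : ‖∑ n ∈ s, (c n - cq (q n)) • x n‖ ≤ (M : ℝ) * (ε / (M + 1)) := by
      refine le_trans (norm_sum_le _ _) ?_
      have hterm : ∀ n ∈ s, ‖(c n - cq (q n)) • x n‖ ≤ ε / (M + 1) := by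
        intro n _
        rw [norm_smul]
        have h1 : ‖c n - cq (q n)‖ ≤ ε / (M + 1) / (‖x n‖ + 1) := (hq n).le
        have h2 : ‖x n‖ ≤ ‖x n‖ + 1 := by linarith
        have h3 := mul_le_mul h1 h2 (norm_nonneg _) (hδ n).le
        have h4 : ε / (M + 1) / (‖x n‖ + 1) * (‖x n‖ + 1) = ε / (M + 1) :=
          div_mul_cancel₀ _ (by positivity)
        rwa [h4] at h3
      calc ∑ n ∈ s, ‖(c n - cq (q n)) • x n‖ ≤ ∑ n ∈ s, (ε / (M + 1)) :=
            Finset.sum_le_sum hterm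
        _ = (M : ℝ) * (ε / (M + 1)) := by
            rw [Finset.sum_const, nsmul_eq_mul, hM]
    have hlt : (M : ℝ) * (ε / (M + 1)) < ε := by
      rw [← mul_div_assoc, div_lt_iff₀ (by positivity)]
      nlinarith [hε]
    exact lt_of_le_of_lt hbound hlt
  exact closure_minimal hspanT isClosed_closure haspan

set_option maxHeartbeats 1000000 in
/-- **Proposition 3.3(2) (multiplication-preserving formulation).** Let `J` be a measurable
range function with corresponding closed subspace `W ⊆ L²(Ω, H)`, `R` a measurable range
operator on `J`, and `U : W → W` a positive bounded linear operator with
`(Uφ)(ω) = R(ω)(φ(ω))` a.e. for every `φ ∈ W`. If `(φ_n)` is a sequence in `W` such that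
`(φ_n(ω))_n` is a Parseval frame for `J(ω)` for a.e. `ω`, then: `R(ω)` is positive on
`J(ω)` a.e.; `Σ_n ⟨U φ_n, φ_n⟩ = ∫_Ω Σ_n ⟨R(ω)(φ_n(ω)), φ_n(ω)⟩ dm(ω)` in `[0, ∞]`;
and consequently, if `Σ_n ⟨U φ_n, φ_n⟩ < ∞`, then `Σ_n ⟨R(ω)(φ_n(ω)), φ_n(ω)⟩ < ∞` for
a.e. `ω`, i.e. `R(ω)` is of finite trace on `J(ω)`. -/
theorem translation_preserving_stmt11
    {Ω H : Type*} [MeasurableSpace Ω] (μ : Measure Ω) [SigmaFinite μ]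
    [NormedAddCommGroup H] [InnerProductSpace ℂ H] [CompleteSpace H]
    [TopologicalSpace.SeparableSpace H]
    [TopologicalSpace.SeparableSpace (Lp ℂ 2 μ)]
    -- `J` is a measurable range function:
    (J : Ω → Submodule ℂ H)
    (hJclosed : ∀ ω, IsClosed ((J ω : Set H)))
    (hJmeas : ∀ a b : H, Measurable fun ω => (inner ℂ (projCLM (J ω) a) b : ℂ))
    -- `R` is a measurable range operator on `J`:
    (R : Ω → H →L[ℂ] H)
    (hR : ∀ᵐ ω ∂μ, ∀ a : H, R ω a = R ω (projCLM (J ω) a))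
    (hRmeas : ∀ a b : H, Measurable fun ω => (inner ℂ (R ω (projCLM (J ω) a)) b : ℂ))
    -- `U : W → W` is a bounded linear operator with `(Uφ)(ω) = R(ω)(φ(ω))` a.e.:
    (U : rangeSubmodule μ J →L[ℂ] rangeSubmodule μ J)
    (hUR : ∀ φ : rangeSubmodule μ J,
      ∀ᵐ ω ∂μ, ((U φ : Lp H 2 μ)) ω = R ω ((φ : Lp H 2 μ) ω))
    -- `U` is positive (self-adjoint with `⟨Uφ, φ⟩ ≥ 0`):
    (hUsa : ∀ φ ψ : rangeSubmodule μ J,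
      (inner ℂ ((U φ : Lp H 2 μ)) (ψ : Lp H 2 μ) : ℂ)
        = inner ℂ (φ : Lp H 2 μ) ((U ψ : Lp H 2 μ)))
    (hUpos : ∀ φ : rangeSubmodule μ J,
      0 ≤ (inner ℂ (φ : Lp H 2 μ) ((U φ : Lp H 2 μ)) : ℂ).re)
    -- `(φ_n)` is a sequence in `W` whose fibers form Parseval frames for `J(ω)` a.e.:
    (φ : ℕ → rangeSubmodule μ J)
    (hφ : ∀ᵐ ω ∂μ, ∀ a ∈ J ω,
      HasSum (fun n => ‖(inner ℂ a ((φ n : Lp H 2 μ) ω) : ℂ)‖ ^ 2) (‖a‖ ^ 2)) :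
    -- `R(ω)` is positive on `J(ω)` for a.e. `ω`:
    (∀ᵐ ω ∂μ, ∀ a ∈ J ω, 0 ≤ (inner ℂ a (R ω a) : ℂ).re) ∧
    -- `Σ_n ⟨U φ_n, φ_n⟩ = ∫ Σ_n ⟨R(ω)(φ_n(ω)), φ_n(ω)⟩ dm(ω)` in `[0, ∞]`:
    ∑' n, ENNReal.ofReal (inner ℂ ((φ n : Lp H 2 μ)) ((U (φ n) : Lp H 2 μ)) : ℂ).re
        = ∫⁻ ω, ∑' n, ENNReal.ofReal
            (inner ℂ ((φ n : Lp H 2 μ) ω) (R ω ((φ n : Lp H 2 μ) ω)) : ℂ).re ∂μ ∧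
    -- consequently `R(ω)` is of finite trace a.e. whenever the sum is finite:
    (∑' n, ENNReal.ofReal (inner ℂ ((φ n : Lp H 2 μ)) ((U (φ n) : Lp H 2 μ)) : ℂ).re < ⊤ →
      ∀ᵐ ω ∂μ, ∑' n, ENNReal.ofReal
          (inner ℂ ((φ n : Lp H 2 μ) ω) (R ω ((φ n : Lp H 2 μ) ω)) : ℂ).re < ⊤) := by
  classical
  -- Step A: positivity of the fiber form along every element of W.
  have stepA : ∀ ψ : rangeSubmodule μ J, ∀ᵐ ω ∂μ,
      0 ≤ (inner ℂ (((ψ : Lp H 2 μ)) ω) (R ω (((ψ : Lp H 2 μ)) ω)) : ℂ).re := by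
    intro ψ
    have hint : Integrable
        (fun ω => (inner ℂ (((ψ : Lp H 2 μ)) ω) (((U ψ : Lp H 2 μ)) ω) : ℂ)) μ :=
      L2.integrable_inner (𝕜 := ℂ) _ _
    have hcongr : (fun ω => (inner ℂ (((ψ : Lp H 2 μ)) ω) (((U ψ : Lp H 2 μ)) ω) : ℂ))
        =ᵐ[μ] fun ω => (inner ℂ (((ψ : Lp H 2 μ)) ω) (R ω (((ψ : Lp H 2 μ)) ω)) : ℂ) := by
      filter_upwards [hUR ψ] with ω h
      rw [h]
    have hint' : Integrable
        (fun ω => (inner ℂ (((ψ : Lp H 2 μ)) ω) (R ω (((ψ : Lp H 2 μ)) ω)) : ℂ).re) μ := by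
      have := (hint.congr hcongr).re
      simpa using this
    have := ae_nonneg_of_forall_setIntegral_nonneg hint' ?_
    · filter_upwards [this] with ω h using h
    intro E hE _
    have hmℒ : MemLp (E.indicator (((ψ : Lp H 2 μ)) : Ω → H)) 2 μ :=
      (Lp.memLp (ψ : Lp H 2 μ)).indicator hE
    set f : Lp H 2 μ := hmℒ.toLp _ with hfdef
    have hfcoe : ⇑f =ᵐ[μ] E.indicator (((ψ : Lp H 2 μ)) : Ω → H) := hmℒ.coeFn_toLp
    have hψ2 : ∀ᵐ ω ∂μ, ((ψ : Lp H 2 μ)) ω ∈ J ω := ψ.2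
    have hfW : f ∈ rangeSubmodule μ J := by
      show ∀ᵐ ω ∂μ, f ω ∈ J ω
      filter_upwards [hfcoe, hψ2] with ω h1 h2
      rw [h1]
      by_cases hω : ω ∈ E
      · rw [Set.indicator_of_mem hω]; exact h2
      · rw [Set.indicator_of_notMem hω]; exact (J ω).zero_mem
    set Ψ : rangeSubmodule μ J := ⟨f, hfW⟩ with hΨdef
    have hintΨ : Integrable (fun ω => (inner ℂ (f ω) (((U Ψ : Lp H 2 μ)) ω) : ℂ)) μ :=
      L2.integrable_inner (𝕜 := ℂ) _ _
    have h1 : (inner ℂ f ((U Ψ : Lp H 2 μ)) : ℂ).re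
        = ∫ ω, (inner ℂ (f ω) (((U Ψ : Lp H 2 μ)) ω) : ℂ).re ∂μ := by
      rw [L2.inner_def]
      simp only [← RCLike.re_to_complex]
      rw [integral_re hintΨ]
    have h2 : (fun ω => (inner ℂ (f ω) (((U Ψ : Lp H 2 μ)) ω) : ℂ).re)
        =ᵐ[μ] E.indicator
          (fun ω => (inner ℂ (((ψ : Lp H 2 μ)) ω) (R ω (((ψ : Lp H 2 μ)) ω)) : ℂ).re) := by
      filter_upwards [hfcoe, hUR Ψ] with ω hf1 hf2
      have hΨω : ((Ψ : Lp H 2 μ)) ω = f ω := rfl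
      rw [hf2, hΨω, hf1]
      by_cases hω : ω ∈ E
      · rw [Set.indicator_of_mem hω, Set.indicator_of_mem hω]
      · rw [Set.indicator_of_notMem hω, Set.indicator_of_notMem hω]
        simp
    calc (0:ℝ) ≤ (inner ℂ f ((U Ψ : Lp H 2 μ)) : ℂ).re := hUpos Ψ
      _ = ∫ ω, (inner ℂ (f ω) (((U Ψ : Lp H 2 μ)) ω) : ℂ).re ∂μ := h1
      _ = ∫ ω, E.indicator
            (fun ω => (inner ℂ (((ψ : Lp H 2 μ)) ω) (R ω (((ψ : Lp H 2 μ)) ω)) : ℂ).re) ω ∂μ :=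
          integral_congr_ae h2
      _ = ∫ ω in E, (inner ℂ (((ψ : Lp H 2 μ)) ω) (R ω (((ψ : Lp H 2 μ)) ω)) : ℂ).re ∂μ :=
          integral_indicator hE
  -- Part 2 pieces
  have key2 : ∀ n, ENNReal.ofReal (inner ℂ ((φ n : Lp H 2 μ)) ((U (φ n) : Lp H 2 μ)) : ℂ).re
      = ∫⁻ ω, ENNReal.ofReal
          (inner ℂ (((φ n : Lp H 2 μ)) ω) (R ω (((φ n : Lp H 2 μ)) ω)) : ℂ).re ∂μ := by
    intro n
    have hint : Integrable
        (fun ω => (inner ℂ (((φ n : Lp H 2 μ)) ω) (((U (φ n) : Lp H 2 μ)) ω) : ℂ)) μ :=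
      L2.integrable_inner (𝕜 := ℂ) _ _
    have hcongr : (fun ω => (inner ℂ (((φ n : Lp H 2 μ)) ω) (((U (φ n) : Lp H 2 μ)) ω) : ℂ))
        =ᵐ[μ] fun ω => (inner ℂ (((φ n : Lp H 2 μ)) ω) (R ω (((φ n : Lp H 2 μ)) ω)) : ℂ) := by
      filter_upwards [hUR (φ n)] with ω h; rw [h]
    have hint' : Integrable
        (fun ω => (inner ℂ (((φ n : Lp H 2 μ)) ω) (R ω (((φ n : Lp H 2 μ)) ω)) : ℂ).re) μ := by
      have := (hint.congr hcongr).re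
      simpa using this
    have h1 : (inner ℂ ((φ n : Lp H 2 μ)) ((U (φ n) : Lp H 2 μ)) : ℂ).re
        = ∫ ω, (inner ℂ (((φ n : Lp H 2 μ)) ω) (R ω (((φ n : Lp H 2 μ)) ω)) : ℂ).re ∂μ := by
      rw [L2.inner_def]
      simp only [← RCLike.re_to_complex]
      rw [← integral_re hint]
      apply integral_congr_ae
      filter_upwards [hcongr] with ω h
      rw [h]
    have hnn : 0 ≤ᵐ[μ]
        fun ω => (inner ℂ (((φ n : Lp H 2 μ)) ω) (R ω (((φ n : Lp H 2 μ)) ω)) : ℂ).re := by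
      filter_upwards [stepA (φ n)] with ω h using h
    rw [h1, ofReal_integral_eq_lintegral_ofReal hint' hnn]
  -- measurability of the fiber integrands
  have hmeasg : ∀ n : ℕ, AEMeasurable (fun ω => ENNReal.ofReal
      (inner ℂ (((φ n : Lp H 2 μ)) ω) (R ω (((φ n : Lp H 2 μ)) ω)) : ℂ).re) μ := by
    intro n
    have hsm : AEStronglyMeasurable
        (fun ω => (inner ℂ (((φ n : Lp H 2 μ)) ω) (((U (φ n) : Lp H 2 μ)) ω) : ℂ)) μ :=
      (Lp.aestronglyMeasurable _).inner (Lp.aestronglyMeasurable _)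
    have h2 : AEMeasurable
        (fun ω => (inner ℂ (((φ n : Lp H 2 μ)) ω) (R ω (((φ n : Lp H 2 μ)) ω)) : ℂ).re) μ := by
      refine (Complex.measurable_re.comp_aemeasurable hsm.aemeasurable).congr ?_
      filter_upwards [hUR (φ n)] with ω h
      simp only [Function.comp, h]
    exact ENNReal.measurable_ofReal.comp_aemeasurable h2
  have part2 : ∑' n, ENNReal.ofReal (inner ℂ ((φ n : Lp H 2 μ)) ((U (φ n) : Lp H 2 μ)) : ℂ).re
      = ∫⁻ ω, ∑' n, ENNReal.ofReal
          (inner ℂ (((φ n : Lp H 2 μ)) ω) (R ω (((φ n : Lp H 2 μ)) ω)) : ℂ).re ∂μ := by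
    simp only [key2]
    exact (lintegral_tsum hmeasg).symm
  -- Part 1: a.e. positivity on the whole fiber J ω
  have hmemAll : ∀ᵐ ω ∂μ, ∀ n : ℕ, ((φ n : Lp H 2 μ)) ω ∈ J ω := by
    rw [ae_all_iff]
    intro n
    exact (φ n).2
  set cq : ℚ × ℚ → ℂ := fun q => ((q.1 : ℝ) + (q.2 : ℝ) * Complex.I) with hcq
  have hcq0 : cq 0 = 0 := by simp [hcq]
  set Ψc : (ℕ →₀ ℚ × ℚ) → rangeSubmodule μ J :=
    fun d => ∑ n ∈ d.support, cq (d n) • φ n with hΨc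
  have hΨcoe : ∀ d : ℕ →₀ ℚ × ℚ, (((Ψc d : Lp H 2 μ)) : Ω → H)
      =ᵐ[μ] fun ω => ∑ n ∈ d.support, cq (d n) • ((φ n : Lp H 2 μ)) ω := by
    intro d
    have hc1 : ((Ψc d : Lp H 2 μ)) = ∑ n ∈ d.support, cq (d n) • (φ n : Lp H 2 μ) := by
      simp [hΨc]
    rw [hc1]
    have h2 := aux_Lp_coeFn_finsetSum d.support (fun n => cq (d n) • (φ n : Lp H 2 μ))
    have h3 : ∀ᵐ ω ∂μ, ∀ n : ℕ,
        (cq (d n) • (φ n : Lp H 2 μ)) ω = cq (d n) • ((φ n : Lp H 2 μ)) ω := by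
      rw [ae_all_iff]
      intro n
      exact Lp.coeFn_smul _ _
    filter_upwards [h2, h3] with ω h2ω h3ω
    rw [h2ω]
    exact Finset.sum_congr rfl fun n hn => h3ω n
  have hQ : ∀ᵐ ω ∂μ, ∀ d : ℕ →₀ ℚ × ℚ,
      0 ≤ (inner ℂ (∑ n ∈ d.support, cq (d n) • ((φ n : Lp H 2 μ)) ω)
            (R ω (∑ n ∈ d.support, cq (d n) • ((φ n : Lp H 2 μ)) ω)) : ℂ).re := by
    rw [ae_all_iff]
    intro d
    filter_upwards [stepA (Ψc d), hΨcoe d] with ω h1 h2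
    rw [h2] at h1
    exact h1
  have part1 : ∀ᵐ ω ∂μ, ∀ a ∈ J ω, 0 ≤ (inner ℂ a (R ω a) : ℂ).re := by
    filter_upwards [hQ, hmemAll, hφ] with ω hQω hmemω hφω
    intro a ha
    exact aux_dense_pos (J ω) (hJclosed ω) (R ω) (fun n => ((φ n : Lp H 2 μ)) ω)
      hmemω (fun b hb => hφω b hb) hQω ha
  refine ⟨part1, part2, ?_⟩
  intro hfin
  rw [part2] at hfin
  have hmeas : AEMeasurable (fun ω => ∑' n, ENNReal.ofReal
      (inner ℂ (((φ n : Lp H 2 μ)) ω) (R ω (((φ n : Lp H 2 μ)) ω)) : ℂ).re) μ :=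
    AEMeasurable.ennreal_tsum hmeasg
  exact ae_lt_top' hmeas hfin.ne
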